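/- arXiv:2012.09975 — 2 statements merged into one kernel-verified Lean document; each statement's English description precedes it below -/
import Mathlib

section
/- Let D be a bounded distributive lattice and μ : D → Γ a Γ-valued measure (monotone, μ(0) = 0°, μ(1) = 1°, and for all a,b: μ(a) ∸̃ μ(a∧b) ≤ μ(a∨b) ∸ μ(b) and μ(a) ∸ μ(a∧b) ≥ μ(a∨b) ∸̃ μ(b)). Then γ ∘ μ : D → [0,1] is a classical finitely additive probability measure: monotone, sends 0 to 0 and 1 to 1, and satisfies (γ∘μ)(a) + (γ∘μ)(b) = (γ∘μ)(a∨b) + (γ∘μ)(a∧b) for all a, b ∈ D. -/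
open scoped Classical

/-- The carrier of the "doubled unit interval" `Γ`: pairs `(r, b)` ordered
lexicographically, where `b = true` represents an exact value `r°`
(which must be rational) and `b = false` represents an approximation `r⁻`
(which must satisfy `r > 0`). -/
def GammaCarrier : Set (Lex (ℝ × Bool)) :=
  {p | 0 ≤ (ofLex p).1 ∧ (ofLex p).1 ≤ 1 ∧
    ((ofLex p).2 = true → ∃ q : ℚ, (q : ℝ) = (ofLex p).1) ∧
    ((ofLex p).2 = false → 0 < (ofLex p).1)}

/-- The doubled unit interval `Γ`, with the (total) order inherited from the
lexicographic product: `r* < s*` iff `r < s`, and `q⁻ < q°` immediately. -/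
abbrev Gamma : Type := {p : Lex (ℝ × Bool) // p ∈ GammaCarrier}

theorem mem_gammaCarrier {a : ℝ} {b : Bool} (h1 : 0 ≤ a) (h2 : a ≤ 1)
    (h3 : b = true → ∃ q : ℚ, (q : ℝ) = a) (h4 : b = false → 0 < a) :
    toLex (a, b) ∈ GammaCarrier := ⟨h1, h2, h3, h4⟩

/-- The underlying real number of an element of `Γ` (the map `γ`). -/
def γmap (x : Gamma) : ℝ := (ofLex x.1).1

/-- An element of `Γ` is exact iff it is of `°`-type. -/
def gexact (x : Gamma) : Prop := (ofLex x.1).2 = true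

theorem gmem (x : Gamma) : 0 ≤ (ofLex x.1).1 ∧ (ofLex x.1).1 ≤ 1 ∧
    ((ofLex x.1).2 = true → ∃ q : ℚ, (q : ℝ) = (ofLex x.1).1) ∧
    ((ofLex x.1).2 = false → 0 < (ofLex x.1).1) := x.2

/-- Smart constructor for `Γ`: clamps `r` into `[0,1]`, and produces the exact
value `r°` if `e = true` and `r` is rational (or `r = 0`), and `r⁻` otherwise. -/
noncomputable def mk' (r : ℝ) (e : Bool) : Gamma :=
  if h : (e = true ∧ ∃ q : ℚ, (q : ℝ) = max 0 (min 1 r)) ∨ max 0 (min 1 r) = 0 then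
    ⟨toLex (max 0 (min 1 r), true),
      mem_gammaCarrier (le_max_left 0 _) (max_le zero_le_one (min_le_left 1 r))
        (fun _ => h.elim (fun h' => h'.2) (fun h0 => ⟨0, by rw [h0]; norm_num⟩))
        (fun hc => absurd hc (by simp))⟩
  else
    ⟨toLex (max 0 (min 1 r), false),
      mem_gammaCarrier (le_max_left 0 _) (max_le zero_le_one (min_le_left 1 r))
        (fun hc => absurd hc (by simp))
        (fun _ => lt_of_le_of_ne (le_max_left 0 _) (fun h0 => h (Or.inr h0.symm)))⟩

/-- `0°`, the bottom element of `Γ`. -/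
noncomputable def gzero : Gamma := mk' 0 true
/-- `1°`, the top element of `Γ`. -/
noncomputable def gone : Gamma := mk' 1 true
/-- The section `ι° : [0,1] → Γ`, `r ↦ r°` for rational `r` and `r ↦ r⁻` otherwise. -/
noncomputable def icircR (r : ℝ) : Gamma := mk' r true
/-- The section `ι⁻ : [0,1] → Γ`, `0 ↦ 0°` and `r ↦ r⁻` for `r > 0`. -/
noncomputable def iminusR (r : ℝ) : Gamma := mk' r false
/-- The exact value `q°` of a rational `q ∈ [0,1]`. -/
noncomputable def gq (q : ℚ) : Gamma := mk' (q : ℝ) true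
/-- `ι°` as a map on the unit interval. -/
noncomputable def icirc (r : Set.Icc (0:ℝ) 1) : Gamma := icircR r.1
/-- `ι⁻` as a map on the unit interval. -/
noncomputable def iminusI (r : Set.Icc (0:ℝ) 1) : Gamma := iminusR r.1
/-- `γ : Γ → [0,1]` as a map into the unit interval. -/
noncomputable def gmapI (x : Gamma) : Set.Icc (0:ℝ) 1 := ⟨γmap x, (gmem x).1, (gmem x).2.1⟩

/-- The partial subtraction `∸` on `Γ` (meaningful when `y ≤ x`):
`r° ∸ s° = (r−s)°`, `r⁻ ∸ s° = (r−s)⁻`, and `r* ∸ s⁻ = (r−s)°` if `r−s ∈ ℚ`,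
`(r−s)⁻` otherwise. -/
noncomputable def gsub (x y : Gamma) : Gamma :=
  mk' (γmap x - γmap y)
    (if (gexact x ∧ gexact y) ∨ (¬ gexact y ∧ ∃ q : ℚ, (q : ℝ) = γmap x - γmap y)
      then true else false)

/-- The second partial subtraction `∸̃` on `Γ` (meaningful when `y ≤ x`):
`x ∸̃ x = 0°` and, for `y < x`, `r° ∸̃ s° = r⁻ ∸̃ s⁻ = r⁻ ∸̃ s° = (r−s)⁻` and
`r° ∸̃ s⁻ = (r−s)°` if `r−s ∈ ℚ`, `(r−s)⁻` otherwise. -/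
noncomputable def gsubt (x y : Gamma) : Gamma :=
  mk' (γmap x - γmap y)
    (if gexact x ∧ ¬ gexact y ∧ ∃ q : ℚ, (q : ℝ) = γmap x - γmap y then true else false)

/-- The partial addition `+` on `Γ` (meaningful when `x ≤ 1° ∸ y`):
`r° + s° = (r+s)°` and any sum involving a `⁻`-argument is of `⁻`-type. -/
noncomputable def gadd (x y : Gamma) : Gamma :=
  mk' (γmap x + γmap y) (if gexact x ∧ gexact y then true else false)

/-- A `Γ`-valued (finitely additive, probability) measure on a bounded lattice. -/
def IsGMeasure {D : Type*} [Lattice D] [BoundedOrder D] (μ : D → Gamma) : Prop :=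
  Monotone μ ∧ μ ⊥ = gzero ∧ μ ⊤ = gone ∧
  ∀ a b : D, gsubt (μ a) (μ (a ⊓ b)) ≤ gsub (μ (a ⊔ b)) (μ b) ∧
    gsubt (μ (a ⊔ b)) (μ b) ≤ gsub (μ a) (μ (a ⊓ b))

/-!
Both partial subtractions `∸` and `∸̃` have the real difference as underlying value whenever
`y ≤ x`, and `γ` is monotone. Applying `γ` to the two defining inequalities of a `Γ`-measure
therefore gives `γμ(a) − γμ(a ∧ b) ≤ γμ(a ∨ b) − γμ(b)` together with the reverse inequality.
-/

theorem γmap_mono : Monotone γmap := fun x y h => by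
  rcases Prod.Lex.le_iff.1 (show x.1 ≤ y.1 from h) with hlt | ⟨heq, -⟩
  · exact hlt.le
  · exact heq.le

theorem γmap_nonneg (x : Gamma) : 0 ≤ γmap x := (gmem x).1

theorem γmap_le_one (x : Gamma) : γmap x ≤ 1 := (gmem x).2.1

theorem γmap_mk'_of_mem {r : ℝ} (h₀ : 0 ≤ r) (h₁ : r ≤ 1) (e : Bool) : γmap (mk' r e) = r := by
  have hclamp : max 0 (min 1 r) = r := by rw [min_eq_right h₁, max_eq_right h₀]
  unfold mk'
  split <;> exact hclamp

theorem γmap_gzero : γmap gzero = 0 := γmap_mk'_of_mem le_rfl zero_le_one true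

theorem γmap_gone : γmap gone = 1 := γmap_mk'_of_mem zero_le_one le_rfl true

theorem γmap_mk'_sub_of_le {x y : Gamma} (h : y ≤ x) (e : Bool) :
    γmap (mk' (γmap x - γmap y) e) = γmap x - γmap y :=
  γmap_mk'_of_mem (sub_nonneg.2 (γmap_mono h))
    (by linarith [γmap_le_one x, γmap_nonneg y]) e

theorem γmap_gsub {x y : Gamma} (h : y ≤ x) : γmap (gsub x y) = γmap x - γmap y :=
  γmap_mk'_sub_of_le h _

theorem γmap_gsubt {x y : Gamma} (h : y ≤ x) : γmap (gsubt x y) = γmap x - γmap y :=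
  γmap_mk'_sub_of_le h _

namespace IsGMeasure

variable {D : Type*} [Lattice D] [BoundedOrder D] {μ : D → Gamma}

theorem monotone_γmap (hμ : IsGMeasure μ) : Monotone (fun a => γmap (μ a)) :=
  γmap_mono.comp hμ.1

theorem γmap_bot (hμ : IsGMeasure μ) : γmap (μ ⊥) = 0 := by
  rw [hμ.2.1, γmap_gzero]

theorem γmap_top (hμ : IsGMeasure μ) : γmap (μ ⊤) = 1 := by
  rw [hμ.2.2.1, γmap_gone]

theorem γmap_add_γmap (hμ : IsGMeasure μ) (a b : D) :
    γmap (μ a) + γmap (μ b) = γmap (μ (a ⊔ b)) + γmap (μ (a ⊓ b)) := by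
  obtain ⟨hle, hge⟩ := hμ.2.2.2 a b
  have hinf : μ (a ⊓ b) ≤ μ a := hμ.1 inf_le_left
  have hsup : μ b ≤ μ (a ⊔ b) := hμ.1 le_sup_right
  have h₁ := γmap_mono hle
  have h₂ := γmap_mono hge
  rw [γmap_gsubt hinf, γmap_gsub hsup] at h₁
  rw [γmap_gsubt hsup, γmap_gsub hinf] at h₂
  linarith

end IsGMeasure

/-- if `μ : D → Γ` is a `Γ`-valued measure on a bounded
distributive lattice `D`, then `γ ∘ μ : D → [0,1]` is a classical finitely
additive probability measure: monotone, sending `0` to `0` and `1` to `1`, and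
modular. -/
theorem stmt_13 {D : Type*} [DistribLattice D] [BoundedOrder D]
    (μ : D → Gamma) (hμ : IsGMeasure μ) :
    Monotone (fun a => γmap (μ a)) ∧
    γmap (μ ⊥) = 0 ∧ γmap (μ ⊤) = 1 ∧
    (∀ a b : D, γmap (μ a) + γmap (μ b) = γmap (μ (a ⊔ b)) + γmap (μ (a ⊓ b))) ∧
    (∀ a : D, 0 ≤ γmap (μ a) ∧ γmap (μ a) ≤ 1) :=
  ⟨hμ.monotone_γmap, hμ.γmap_bot, hμ.γmap_top, hμ.γmap_add_γmap,
    fun a => ⟨γmap_nonneg (μ a), γmap_le_one (μ a)⟩⟩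
end

section
/- Let D be a bounded distributive lattice and m : D → [0,1] a classical finitely additive probability measure (monotone, m(0) = 0, m(1) = 1, m(a)+m(b) = m(a∨b)+m(a∧b)). Then ι° ∘ m : D → Γ is a Γ-valued measure. -/
open scoped Classical

/-!
By modularity of `m`, both sides of each defining inequality have the same real part
`m a - m (a ⊓ b) = m (a ⊔ b) - m b`. A difference `ι° r ∸̃ ι° s` is never of `°`-type
(that would need `r` rational, `s` irrational and `r - s` rational), so it is the least
element `(r - s)⁻` of `Γ` over that real part, and hence below any `∸`-difference.
-/

lemma gamma_le_iff {x y : Gamma} :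
    x ≤ y ↔ (ofLex x.1).1 < (ofLex y.1).1 ∨
      ((ofLex x.1).1 = (ofLex y.1).1 ∧ (ofLex x.1).2 ≤ (ofLex y.1).2) :=
  Subtype.coe_le_coe.symm.trans Prod.Lex.le_iff

lemma γmap_mk' (r : ℝ) (e : Bool) : γmap (mk' r e) = max 0 (min 1 r) := by
  unfold mk'; split <;> rfl

lemma mk'_congr {r s : ℝ} (e : Bool) (h : max 0 (min 1 r) = max 0 (min 1 s)) :
    mk' r e = mk' s e := by
  unfold mk'; simp only [h]

lemma mk'_false_le (r : ℝ) (e : Bool) : mk' r false ≤ mk' r e := by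
  unfold mk'
  by_cases hc : max 0 (min 1 r) = 0
  · rw [dif_pos (Or.inr hc), dif_pos (Or.inr hc)]
  · rw [dif_neg (by simp [hc])]
    split
    · exact gamma_le_iff.mpr (Or.inr ⟨rfl, by simp⟩)
    · exact le_rfl

lemma icircR_mono : Monotone icircR := by
  intro r s h
  rcases (max_le_max_left 0 (min_le_min_left 1 h)).lt_or_eq with hlt | heq
  · rw [← γmap_mk' r true, ← γmap_mk' s true] at hlt
    exact gamma_le_iff.mpr (Or.inl hlt)
  · exact (mk'_congr true heq).le

lemma γmap_icircR {r : ℝ} (hr0 : 0 ≤ r) (hr1 : r ≤ 1) : γmap (icircR r) = r := by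
  rw [icircR, γmap_mk', min_eq_right hr1, max_eq_right hr0]

lemma gexact_icircR_iff {r : ℝ} (hr0 : 0 ≤ r) (hr1 : r ≤ 1) :
    gexact (icircR r) ↔ ∃ q : ℚ, (q : ℝ) = r := by
  have hclamp : max 0 (min 1 r) = r := by rw [min_eq_right hr1, max_eq_right hr0]
  unfold icircR mk'
  split
  · next hc =>
      simp only [gexact, ofLex_toLex, true_iff]
      rcases hc with ⟨_, hq⟩ | hz
      · rwa [hclamp] at hq
      · exact ⟨0, by rw [hclamp] at hz; simp [hz]⟩
  · next hc =>
      simp only [gexact, ofLex_toLex, Bool.false_eq_true, false_iff]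
      rw [hclamp] at hc
      exact fun hq => hc (Or.inl ⟨rfl, hq⟩)

lemma gsubt_icircR {r s : ℝ} (hr0 : 0 ≤ r) (hr1 : r ≤ 1) (hs0 : 0 ≤ s) (hs1 : s ≤ 1) :
    gsubt (icircR r) (icircR s) = mk' (r - s) false := by
  unfold gsubt
  rw [gexact_icircR_iff hr0 hr1, gexact_icircR_iff hs0 hs1, γmap_icircR hr0 hr1,
    γmap_icircR hs0 hs1, if_neg]
  rintro ⟨⟨qr, hqr⟩, hs, q, hq⟩
  exact hs ⟨qr - q, by push_cast; linarith⟩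

lemma gsubt_icircR_le_gsub {r s : ℝ} (hr0 : 0 ≤ r) (hr1 : r ≤ 1) (hs0 : 0 ≤ s)
    (hs1 : s ≤ 1) {x y : Gamma} (h : γmap x - γmap y = r - s) :
    gsubt (icircR r) (icircR s) ≤ gsub x y := by
  rw [gsubt_icircR hr0 hr1 hs0 hs1, gsub, h]
  exact mk'_false_le _ _

/-- if `m : D → [0,1]` is a classical finitely additive
probability measure on a bounded distributive lattice `D`, then
`ι° ∘ m : D → Γ` is a `Γ`-valued measure. -/
theorem stmt_14 {D : Type*} [DistribLattice D] [BoundedOrder D]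
    (m : D → ℝ) (h1 : Monotone m) (h2 : m ⊥ = 0) (h3 : m ⊤ = 1)
    (h4 : ∀ a b : D, m a + m b = m (a ⊔ b) + m (a ⊓ b)) :
    IsGMeasure (fun a => icircR (m a)) := by
  have hm0 : ∀ a : D, 0 ≤ m a := fun a => h2 ▸ h1 bot_le
  have hm1 : ∀ a : D, m a ≤ 1 := fun a => h3 ▸ h1 le_top
  have hγ : ∀ a : D, γmap (icircR (m a)) = m a := fun a => γmap_icircR (hm0 a) (hm1 a)
  refine ⟨icircR_mono.comp h1, by simp only [h2]; rfl, by simp only [h3]; rfl,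
    fun a b => ⟨?_, ?_⟩⟩ <;>
  · refine gsubt_icircR_le_gsub (hm0 _) (hm1 _) (hm0 _) (hm1 _) ?_
    rw [hγ, hγ]
    linarith [h4 a b]
end
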